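/- arXiv:2007.14064 — 7 statements merged into one kernel-verified Lean document; each statement's English description precedes it below -/
import Mathlib

section
/- Fix an arbitrary angle vector γ* ∈ ℝⁿ. Then the matrices Z_C + 𝐁 Z_ℓ⁻¹ 𝐁ᵀ and Z_R + (Z_C + 𝐁 Z_ℓ⁻¹ 𝐁ᵀ)⁻¹ are invertible, and setting ξ = μ²v_dc*/4, Y = (Z_R + (Z_C + 𝐁 Z_ℓ⁻¹ 𝐁ᵀ)⁻¹)⁻¹, u = ξ·Rot(γ*)ᵀ Y Rot(γ*) 1ₙ, i* = (μ v_dc*/2)·Y Rot(γ*) 1ₙ, v* = (Z_C + 𝐁 Z_ℓ⁻¹ 𝐁ᵀ)⁻¹ i*, and i_ℓ* = Z_ℓ⁻¹ 𝐁ᵀ v*, the point z* = (γ*, 0, i*, v*, i_ℓ*) is an equilibrium of the multi-converter model, i.e. f(z*, u) = 0 (all five components of the vector field vanish). -/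
noncomputable section
open Matrix
open scoped Kronecker

abbrev PSState (n m : ℕ) :=
  (Fin n → ℝ) × (Fin n → ℝ) × (Fin n × Fin 2 → ℝ) × (Fin n × Fin 2 → ℝ) × (Fin m × Fin 2 → ℝ)

def J2 : Matrix (Fin 2) (Fin 2) ℝ := !![0, -1; 1, 0]
def rvec (θ : ℝ) : Fin 2 → ℝ := ![-(Real.sin θ), Real.cos θ]
def RotM {n : ℕ} (γ : Fin n → ℝ) : Matrix (Fin n × Fin 2) (Fin n) ℝ :=
  Matrix.of fun p j => if p.1 = j then rvec (γ j) p.2 else 0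
def bigJ (k : ℕ) : Matrix (Fin k × Fin 2) (Fin k × Fin 2) ℝ :=
  (1 : Matrix (Fin k) (Fin k) ℝ) ⊗ₖ J2

def ZR (n : ℕ) (R L ωs : ℝ) : Matrix (Fin n × Fin 2) (Fin n × Fin 2) ℝ := R • 1 + (L * ωs) • bigJ n
def ZC (n : ℕ) (G C ωs : ℝ) : Matrix (Fin n × Fin 2) (Fin n × Fin 2) ℝ := G • 1 + (C * ωs) • bigJ n
def Zl (m : ℕ) (Rl Ll ωs : ℝ) : Matrix (Fin m × Fin 2) (Fin m × Fin 2) ℝ := Rl • 1 + (Ll * ωs) • bigJ m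
def BB {n m : ℕ} (𝓑 : Matrix (Fin n) (Fin m) ℝ) : Matrix (Fin n × Fin 2) (Fin m × Fin 2) ℝ :=
  𝓑 ⊗ₖ (1 : Matrix (Fin 2) (Fin 2) ℝ)

/-- The multi-converter power-system vector field. -/
def psf {n m : ℕ} (𝓑 : Matrix (Fin n) (Fin m) ℝ)
    (R L C G Rl Ll Cdc Kp η ωs vdc μ : ℝ)
    (z : PSState n m) (u : Fin n → ℝ) : PSState n m :=
  ( η • z.2.1,
    Cdc⁻¹ • (-(Kp • z.2.1) - (μ / 2) • ((RotM z.1)ᵀ *ᵥ z.2.2.1) + u),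
    L⁻¹ • (-(ZR n R L ωs *ᵥ z.2.2.1) + (μ / 2) • (RotM z.1 *ᵥ (z.2.1 + Function.const _ vdc)) - z.2.2.2.1),
    C⁻¹ • (-(ZC n G C ωs *ᵥ z.2.2.2.1) + z.2.2.1 - BB 𝓑 *ᵥ z.2.2.2.2),
    Ll⁻¹ • (-(Zl m Rl Ll ωs *ᵥ z.2.2.2.2) + (BB 𝓑)ᵀ *ᵥ z.2.2.2.1) )

set_option linter.unusedSectionVars false

variable {k : Type*} [Fintype k] [DecidableEq k]

lemma mv_dot {l : Type*} [Fintype l] (A : Matrix k l ℝ) (x : k → ℝ) (y : l → ℝ) :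
    x ⬝ᵥ (A *ᵥ y) = (Aᵀ *ᵥ x) ⬝ᵥ y := by
  rw [Matrix.dotProduct_mulVec]
  congr 1
  rw [← Matrix.transpose_transpose A, Matrix.vecMul_transpose, Matrix.transpose_transpose]

/-- Positive quadratic form. -/
def PP (M : Matrix k k ℝ) : Prop := ∀ x : k → ℝ, x ≠ 0 → 0 < x ⬝ᵥ (M *ᵥ x)
def NN (M : Matrix k k ℝ) : Prop := ∀ x : k → ℝ, 0 ≤ x ⬝ᵥ (M *ᵥ x)

lemma PP.isUnit {M : Matrix k k ℝ} (h : PP M) : IsUnit M := by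
  rw [Matrix.isUnit_iff_isUnit_det, isUnit_iff_ne_zero]
  intro hdet
  obtain ⟨v, hv, hMv⟩ := (Matrix.exists_mulVec_eq_zero_iff).2 hdet
  have := h v hv
  rw [hMv, dotProduct_zero] at this
  exact lt_irrefl 0 this

lemma PP.add_NN {M N : Matrix k k ℝ} (hM : PP M) (hN : NN N) : PP (M + N) := by
  intro x hx
  rw [Matrix.add_mulVec, dotProduct_add]
  have := hM x hx; have := hN x; linarith

lemma PP_smul_one {a : ℝ} (ha : 0 < a) : PP (a • (1 : Matrix k k ℝ)) := by
  intro x hx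
  rw [Matrix.smul_mulVec, Matrix.one_mulVec, dotProduct_smul, smul_eq_mul]
  have : 0 < x ⬝ᵥ x := by
    rcases lt_or_eq_of_le (dotProduct_self_star_nonneg x) with h | h
    · simpa using h
    · exact absurd (dotProduct_self_eq_zero.1 (by simpa using h.symm)) hx
  positivity

lemma skew_quad {M : Matrix k k ℝ} (h : Mᵀ = -M) (x : k → ℝ) : x ⬝ᵥ (M *ᵥ x) = 0 := by
  have h1 : x ⬝ᵥ (M *ᵥ x) = (M *ᵥ x) ⬝ᵥ x := dotProduct_comm _ _
  have h2 : x ⬝ᵥ (M *ᵥ x) = (Mᵀ *ᵥ x) ⬝ᵥ x := mv_dot M x x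
  rw [h, Matrix.neg_mulVec, neg_dotProduct] at h2
  linarith [dotProduct_comm (M *ᵥ x) x]

lemma quad_transpose (M : Matrix k k ℝ) (x : k → ℝ) : x ⬝ᵥ (Mᵀ *ᵥ x) = x ⬝ᵥ (M *ᵥ x) := by
  rw [mv_dot, Matrix.transpose_transpose, dotProduct_comm]

lemma PP.inv {M : Matrix k k ℝ} (h : PP M) : PP M⁻¹ := by
  have hu := h.isUnit
  have hd : IsUnit M.det := (Matrix.isUnit_iff_isUnit_det M).1 hu
  intro y hy
  set w := M⁻¹ *ᵥ y with hw
  have hMw : M *ᵥ w = y := by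
    rw [hw, Matrix.mulVec_mulVec, Matrix.mul_nonsing_inv M hd, Matrix.one_mulVec]
  have hwne : w ≠ 0 := by
    intro h0
    apply hy; rw [← hMw, h0, Matrix.mulVec_zero]
  have e1 : y ⬝ᵥ (M⁻¹ *ᵥ y) = (M *ᵥ w) ⬝ᵥ w := by rw [hMw]
  have e2 : (M *ᵥ w) ⬝ᵥ w = w ⬝ᵥ (Mᵀ *ᵥ w) := by
    rw [dotProduct_comm, mv_dot M w w, dotProduct_comm]
  rw [e1, e2, quad_transpose]
  exact h w hwne

lemma NN_conj {l : Type*} [Fintype l] [DecidableEq l] {M : Matrix l l ℝ}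
    (h : NN M) (B : Matrix k l ℝ) : NN (B * M * Bᵀ) := by
  intro x
  have : x ⬝ᵥ ((B * M * Bᵀ) *ᵥ x) = (Bᵀ *ᵥ x) ⬝ᵥ (M *ᵥ (Bᵀ *ᵥ x)) := by
    rw [← Matrix.mulVec_mulVec, ← Matrix.mulVec_mulVec, mv_dot]
  rw [this]; exact h _

lemma PP.toNN {M : Matrix k k ℝ} (h : PP M) : NN M := by
  intro x
  by_cases hx : x = 0
  · simp [hx]
  · exact (h x hx).le


lemma bigJ_skew (k : ℕ) : (bigJ k)ᵀ = -(bigJ k) := by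
  ext p q
  simp only [bigJ, Matrix.transpose_apply, Matrix.kroneckerMap_apply, Matrix.neg_apply]
  rcases p with ⟨i, a⟩; rcases q with ⟨j, b⟩
  have hJ : J2 b a = -(J2 a b) := by
    fin_cases a <;> fin_cases b <;> simp [J2]
  by_cases hij : i = j
  · subst hij; simp only [Matrix.one_apply_eq, hJ]; ring
  · simp [Matrix.one_apply, hij, Ne.symm hij]

lemma NN_smul_bigJ (k : ℕ) (b : ℝ) : NN (b • bigJ k) := by
  intro x
  rw [Matrix.smul_mulVec, dotProduct_smul, smul_eq_mul,
    skew_quad (bigJ_skew k) x, mul_zero]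

lemma PP_Z (k : ℕ) {a : ℝ} (b : ℝ) (ha : 0 < a) :
    PP (a • (1 : Matrix (Fin k × Fin 2) _ ℝ) + b • bigJ k) :=
  (PP_smul_one ha).add_NN (NN_smul_bigJ k b)


theorem stmt0 {n m : ℕ} (𝓑 : Matrix (Fin n) (Fin m) ℝ)
    (R L C G Rl Ll Cdc Kp η ωs vdc μ : ℝ)
    (hR : 0 < R) (hL : 0 < L) (hC : 0 < C) (hG : 0 < G) (hRl : 0 < Rl) (hLl : 0 < Ll)
    (hCdc : 0 < Cdc) (hKp : 0 < Kp) (hη : 0 < η) (hωs : 0 < ωs) (hvdc : 0 < vdc)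
    (hμ : μ ∈ Set.Ioo (0:ℝ) 1)
    (γs : Fin n → ℝ) :
    IsUnit (ZC n G C ωs + BB 𝓑 * (Zl m Rl Ll ωs)⁻¹ * (BB 𝓑)ᵀ) ∧
    IsUnit (ZR n R L ωs + (ZC n G C ωs + BB 𝓑 * (Zl m Rl Ll ωs)⁻¹ * (BB 𝓑)ᵀ)⁻¹) ∧
    (let Y := (ZR n R L ωs + (ZC n G C ωs + BB 𝓑 * (Zl m Rl Ll ωs)⁻¹ * (BB 𝓑)ᵀ)⁻¹)⁻¹
     let u : Fin n → ℝ := (μ ^ 2 * vdc / 4) • (((RotM γs)ᵀ * Y * RotM γs) *ᵥ Function.const _ 1)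
     let istar := (μ * vdc / 2) • ((Y * RotM γs) *ᵥ Function.const _ 1)
     let vstar := (ZC n G C ωs + BB 𝓑 * (Zl m Rl Ll ωs)⁻¹ * (BB 𝓑)ᵀ)⁻¹ *ᵥ istar
     let ilstar := ((Zl m Rl Ll ωs)⁻¹ * (BB 𝓑)ᵀ) *ᵥ vstar
     psf 𝓑 R L C G Rl Ll Cdc Kp η ωs vdc μ (γs, 0, istar, vstar, ilstar) u = 0) := by
  obtain ⟨hμ0, hμ1⟩ := hμ
  have hPPZl : PP (Zl m Rl Ll ωs) := PP_Z m (Ll * ωs) hRl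
  have hPPZC : PP (ZC n G C ωs) := PP_Z n (C * ωs) hG
  have hPPZR : PP (ZR n R L ωs) := PP_Z n (L * ωs) hR
  set M := ZC n G C ωs + BB 𝓑 * (Zl m Rl Ll ωs)⁻¹ * (BB 𝓑)ᵀ with hMdef
  have hPPM : PP M := hPPZC.add_NN (NN_conj hPPZl.inv.toNN (BB 𝓑))
  have hPPS : PP (ZR n R L ωs + M⁻¹) := hPPZR.add_NN hPPM.inv.toNN
  have hMu : IsUnit M := hPPM.isUnit
  have hSu : IsUnit (ZR n R L ωs + M⁻¹) := hPPS.isUnit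
  have hMd : IsUnit M.det := (Matrix.isUnit_iff_isUnit_det M).1 hMu
  have hSd : IsUnit (ZR n R L ωs + M⁻¹).det := (Matrix.isUnit_iff_isUnit_det _).1 hSu
  have hZld : IsUnit (Zl m Rl Ll ωs).det := (Matrix.isUnit_iff_isUnit_det _).1 hPPZl.isUnit
  refine ⟨hMu, hSu, ?_⟩
  intro Y u istar vstar ilstar
  have hY : (ZR n R L ωs + M⁻¹) * Y = 1 := Matrix.mul_nonsing_inv _ hSd
  have hMM : M * M⁻¹ = 1 := Matrix.mul_nonsing_inv _ hMd
  have hZZ : Zl m Rl Ll ωs * (Zl m Rl Ll ωs)⁻¹ = 1 := Matrix.mul_nonsing_inv _ hZld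
  have histar : istar = (μ * vdc / 2) • ((Y * RotM γs) *ᵥ Function.const _ 1) := rfl
  have hvstar : vstar = M⁻¹ *ᵥ istar := rfl
  have hilstar : ilstar = ((Zl m Rl Ll ωs)⁻¹ * (BB 𝓑)ᵀ) *ᵥ vstar := rfl
  have hu : u = (μ ^ 2 * vdc / 4) • (((RotM γs)ᵀ * Y * RotM γs) *ᵥ Function.const _ 1) := rfl
  simp only [psf]
  refine Prod.ext ?_ (Prod.ext ?_ (Prod.ext ?_ (Prod.ext ?_ ?_)))
  · simp
  · -- dc voltage component
    have key : (μ / 2) • ((RotM γs)ᵀ *ᵥ istar) = u := by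
      rw [histar, hu, Matrix.mulVec_smul, Matrix.mulVec_mulVec, smul_smul,
        ← Matrix.mul_assoc]
      congr 1
      ring
    show Cdc⁻¹ • (-(Kp • (0 : Fin n → ℝ)) - (μ / 2) • ((RotM γs)ᵀ *ᵥ istar) + u) = 0
    rw [key]
    simp
  · -- current component
    have h3 : ZR n R L ωs *ᵥ istar + vstar
        = (μ * vdc / 2) • (RotM γs *ᵥ Function.const _ 1) := by
      rw [hvstar, histar, ← Matrix.add_mulVec, Matrix.mulVec_smul,
        Matrix.mulVec_mulVec, ← Matrix.mul_assoc, hY, Matrix.one_mul]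
    have hconst : (μ / 2) • (RotM γs *ᵥ ((0 : Fin n → ℝ) + Function.const (Fin n) vdc))
        = (μ * vdc / 2) • (RotM γs *ᵥ Function.const _ 1) := by
      have : ((0 : Fin n → ℝ) + Function.const (Fin n) vdc)
          = vdc • (Function.const (Fin n) 1) := by
        funext j; simp [Function.const]
      rw [this, Matrix.mulVec_smul, smul_smul]
      congr 1
      ring
    show L⁻¹ • (-(ZR n R L ωs *ᵥ istar)
        + (μ / 2) • (RotM γs *ᵥ ((0 : Fin n → ℝ) + Function.const _ vdc)) - vstar) = 0
    rw [hconst, ← h3]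
    rw [show -(ZR n R L ωs *ᵥ istar) + (ZR n R L ωs *ᵥ istar + vstar) - vstar = 0 by abel]
    simp
  · -- capacitor voltage component
    have h4 : ZC n G C ωs *ᵥ vstar + BB 𝓑 *ᵥ ilstar = istar := by
      have hmat : ZC n G C ωs * M⁻¹
          + BB 𝓑 * ((Zl m Rl Ll ωs)⁻¹ * (BB 𝓑)ᵀ * M⁻¹) = 1 := by
        have hassoc : BB 𝓑 * ((Zl m Rl Ll ωs)⁻¹ * (BB 𝓑)ᵀ * M⁻¹)
            = (BB 𝓑 * (Zl m Rl Ll ωs)⁻¹ * (BB 𝓑)ᵀ) * M⁻¹ := by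
          simp only [Matrix.mul_assoc]
        rw [hassoc, ← Matrix.add_mul, ← hMdef, hMM]
      rw [hilstar, hvstar]
      simp only [Matrix.mulVec_mulVec]
      rw [← Matrix.add_mulVec, hmat, Matrix.one_mulVec]
    show C⁻¹ • (-(ZC n G C ωs *ᵥ vstar) + istar - BB 𝓑 *ᵥ ilstar) = 0
    rw [← h4]
    rw [show -(ZC n G C ωs *ᵥ vstar) + (ZC n G C ωs *ᵥ vstar + BB 𝓑 *ᵥ ilstar)
        - BB 𝓑 *ᵥ ilstar = 0 by abel]
    simp
  · -- line current component
    have h5 : Zl m Rl Ll ωs *ᵥ ilstar = (BB 𝓑)ᵀ *ᵥ vstar := by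
      rw [hilstar, Matrix.mulVec_mulVec, ← Matrix.mul_assoc, hZZ, Matrix.one_mul]
    show Ll⁻¹ • (-(Zl m Rl Ll ωs *ᵥ ilstar) + (BB 𝓑)ᵀ *ᵥ vstar) = 0
    rw [← h5]
    simp
end
end

section
/- The multi-converter vector field is rotationally invariant: for every θ ∈ ℝ, every state z = (γ, ṽ_dc, i, v, i_ℓ) and every input u ∈ ℝⁿ, f(θ·s₀ + S(θ)z, u) = S(θ)·f(z, u), where s₀ = (1ₙ, 0, 0, 0, 0), S(θ) = blockdiag(I_n, I_n, 𝐑(θ)), and 𝐑(θ) = blockdiag(I_n ⊗ R(θ), I_n ⊗ R(θ), I_m ⊗ R(θ)) with R(θ) = [[cos θ, −sin θ],[sin θ, cos θ]] acting on (i, v, i_ℓ). Equivalently, f((γ + θ1ₙ, ṽ_dc, (I_n⊗R(θ))i, (I_n⊗R(θ))v, (I_m⊗R(θ))i_ℓ), u) equals S(θ) applied to f((γ, ṽ_dc, i, v, i_ℓ), u). -/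
noncomputable section
open Matrix
open scoped Kronecker

/-- The 2×2 rotation matrix. -/
def Rtheta (θ : ℝ) : Matrix (Fin 2) (Fin 2) ℝ :=
  !![Real.cos θ, -(Real.sin θ); Real.sin θ, Real.cos θ]

/-- `I_k ⊗ R(θ)`, rotating each 2-dimensional block of an AC signal. -/
def bigR (k : ℕ) (θ : ℝ) : Matrix (Fin k × Fin 2) (Fin k × Fin 2) ℝ :=
  (1 : Matrix (Fin k) (Fin k) ℝ) ⊗ₖ Rtheta θ

/-- The symmetry action `z ↦ θ·s₀ + S(θ) z` on the state space. -/
def rotAction {n m : ℕ} (θ : ℝ) (z : PSState n m) : PSState n m :=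
  (z.1 + Function.const _ θ, z.2.1, bigR n θ *ᵥ z.2.2.1, bigR n θ *ᵥ z.2.2.2.1,
    bigR m θ *ᵥ z.2.2.2.2)

/-- The linear part `S(θ)` of the symmetry action (no angle shift). -/
def rotLin {n m : ℕ} (θ : ℝ) (w : PSState n m) : PSState n m :=
  (w.1, w.2.1, bigR n θ *ᵥ w.2.2.1, bigR n θ *ᵥ w.2.2.2.1, bigR m θ *ᵥ w.2.2.2.2)


lemma Rtheta_t_mul (θ : ℝ) : (Rtheta θ)ᵀ * Rtheta θ = 1 := by
  have ht : (Rtheta θ)ᵀ = !![Real.cos θ, Real.sin θ; -(Real.sin θ), Real.cos θ] := by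
    ext i j; fin_cases i <;> fin_cases j <;> rfl
  rw [ht, Rtheta, Matrix.mul_fin_two, Matrix.one_fin_two]
  have h := Real.sin_sq_add_cos_sq θ
  ext i j
  fin_cases i <;> fin_cases j <;> simp <;> nlinarith [h]

lemma Rtheta_comm_J2 (θ : ℝ) : Rtheta θ * J2 = J2 * Rtheta θ := by
  ext i j
  fin_cases i <;> fin_cases j <;>
    simp [Rtheta, J2, Matrix.mul_apply, Fin.sum_univ_two]

lemma bigR_t_mul (k : ℕ) (θ : ℝ) : (bigR k θ)ᵀ * bigR k θ = 1 := by
  rw [bigR, ← Matrix.kroneckerMap_transpose, ← Matrix.mul_kronecker_mul]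
  simp [Rtheta_t_mul, Matrix.one_kronecker_one]

lemma bigR_comm_bigJ (k : ℕ) (θ : ℝ) : bigR k θ * bigJ k = bigJ k * bigR k θ := by
  rw [bigR, bigJ, ← Matrix.mul_kronecker_mul, ← Matrix.mul_kronecker_mul, Rtheta_comm_J2,
    Matrix.one_mul]

lemma bigR_comm_aux (k : ℕ) (θ a b : ℝ) :
    bigR k θ * (a • (1 : Matrix (Fin k × Fin 2) (Fin k × Fin 2) ℝ) + b • bigJ k)
      = (a • 1 + b • bigJ k) * bigR k θ := by
  rw [Matrix.mul_add, Matrix.add_mul, Matrix.mul_smul, Matrix.smul_mul, Matrix.mul_smul,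
    Matrix.smul_mul, Matrix.mul_one, Matrix.one_mul, bigR_comm_bigJ]

lemma bigR_comm_BB {n m : ℕ} (𝓑 : Matrix (Fin n) (Fin m) ℝ) (θ : ℝ) :
    bigR n θ * BB 𝓑 = BB 𝓑 * bigR m θ := by
  have h1 : bigR n θ * BB 𝓑 = 𝓑 ⊗ₖ Rtheta θ := by
    rw [bigR, BB, ← Matrix.mul_kronecker_mul, Matrix.one_mul, Matrix.mul_one]
  have h2 : BB 𝓑 * bigR m θ = 𝓑 ⊗ₖ Rtheta θ := by
    rw [bigR, BB, ← Matrix.mul_kronecker_mul, Matrix.one_mul, Matrix.mul_one]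
  rw [h1, h2]

lemma bigR_comm_BBT {n m : ℕ} (𝓑 : Matrix (Fin n) (Fin m) ℝ) (θ : ℝ) :
    bigR m θ * (BB 𝓑)ᵀ = (BB 𝓑)ᵀ * bigR n θ := by
  have hT : (BB 𝓑)ᵀ = 𝓑ᵀ ⊗ₖ (1 : Matrix (Fin 2) (Fin 2) ℝ) := by
    rw [BB, ← Matrix.kroneckerMap_transpose, Matrix.transpose_one]
  have h1 : bigR m θ * (BB 𝓑)ᵀ = 𝓑ᵀ ⊗ₖ Rtheta θ := by
    rw [hT, bigR, ← Matrix.mul_kronecker_mul, Matrix.one_mul, Matrix.mul_one]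
  have h2 : (BB 𝓑)ᵀ * bigR n θ = 𝓑ᵀ ⊗ₖ Rtheta θ := by
    rw [hT, bigR, ← Matrix.mul_kronecker_mul, Matrix.one_mul, Matrix.mul_one]
  rw [h1, h2]

lemma RotM_shift {n : ℕ} (γ : Fin n → ℝ) (θ : ℝ) :
    RotM (γ + Function.const _ θ) = bigR n θ * RotM γ := by
  ext ⟨p, a⟩ j
  simp only [RotM, bigR, Matrix.mul_apply, Matrix.of_apply, Fintype.sum_prod_type,
    Matrix.kroneckerMap_apply, Matrix.one_apply]
  rw [Finset.sum_eq_single j]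
  · by_cases h : p = j
    · subst h
      fin_cases a <;>
        simp [rvec, Fin.sum_univ_two, Rtheta, Real.sin_add, Real.cos_add, Function.const] <;> ring
    · simp [h]
  · intro b _ hb; simp [hb, Ne.symm hb]
  · simp

theorem stmt2 {n m : ℕ} (𝓑 : Matrix (Fin n) (Fin m) ℝ)
    (R L C G Rl Ll Cdc Kp η ωs vdc μ : ℝ)
    (hR : 0 < R) (hL : 0 < L) (hC : 0 < C) (hG : 0 < G) (hRl : 0 < Rl) (hLl : 0 < Ll)
    (hCdc : 0 < Cdc) (hKp : 0 < Kp) (hη : 0 < η) (hωs : 0 < ωs) (hvdc : 0 < vdc)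
    (hμ : μ ∈ Set.Ioo (0:ℝ) 1)
    (θ : ℝ) (z : PSState n m) (u : Fin n → ℝ) :
    psf 𝓑 R L C G Rl Ll Cdc Kp η ωs vdc μ (rotAction θ z) u
      = rotLin θ (psf 𝓑 R L C G Rl Ll Cdc Kp η ωs vdc μ z u) := by
  obtain ⟨γ, w, i, v, il⟩ := z
  have hRot := RotM_shift γ θ
  have hZR : bigR n θ * ZR n R L ωs = ZR n R L ωs * bigR n θ := bigR_comm_aux n θ R (L * ωs)
  have hZC : bigR n θ * ZC n G C ωs = ZC n G C ωs * bigR n θ := bigR_comm_aux n θ G (C * ωs)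
  have hZl : bigR m θ * Zl m Rl Ll ωs = Zl m Rl Ll ωs * bigR m θ := bigR_comm_aux m θ Rl (Ll * ωs)
  have hBB := bigR_comm_BB 𝓑 θ
  have hBBT := bigR_comm_BBT 𝓑 θ
  simp only [psf, rotAction, rotLin, Prod.mk.injEq]
  refine ⟨trivial, ?_, ?_, ?_, ?_⟩
  · rw [hRot, Matrix.transpose_mul, Matrix.mulVec_mulVec, Matrix.mul_assoc, bigR_t_mul,
      Matrix.mul_one]
  · simp only [hRot, Matrix.mulVec_smul, Matrix.mulVec_sub, Matrix.mulVec_add,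
      Matrix.mulVec_neg, Matrix.mulVec_mulVec, hZR]
  · simp only [Matrix.mulVec_smul, Matrix.mulVec_sub, Matrix.mulVec_add,
      Matrix.mulVec_neg, Matrix.mulVec_mulVec, hZC, hBB]
  · simp only [Matrix.mulVec_smul, Matrix.mulVec_add, Matrix.mulVec_neg,
      Matrix.mulVec_mulVec, hZl, hBBT]
end
end

section
/- Let Q₁ ∈ ℝ^{a×a} be symmetric positive definite, Q₂ ∈ ℝ^{b×b} symmetric positive semidefinite with kernel exactly span{p₂} for some nonzero p₂ ∈ ℝ^b, and H ∈ ℝ^{b×a}. Set p₁ = −Q₁⁻¹Hᵀp₂ and p = (p₁, p₂). Then the kernel of the block matrix Q = [[Q₁, Hᵀ],[H, H Q₁⁻¹ Hᵀ + Q₂]] equals span{p}. -/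
noncomputable section
open Matrix

theorem stmt9 {a b : ℕ}
    (Q1 : Matrix (Fin a) (Fin a) ℝ) (hQ1 : Q1.PosDef)
    (Q2 : Matrix (Fin b) (Fin b) ℝ) (hQ2 : Q2.PosSemidef)
    (p2 : Fin b → ℝ) (hp2 : p2 ≠ 0)
    (hkerQ2 : LinearMap.ker (Matrix.toLin' Q2) = Submodule.span ℝ {p2})
    (H : Matrix (Fin b) (Fin a) ℝ) :
    LinearMap.ker (Matrix.toLin'
        (Matrix.fromBlocks Q1 Hᵀ H (H * Q1⁻¹ * Hᵀ + Q2)))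
      = Submodule.span ℝ {Sum.elim (-(Q1⁻¹ *ᵥ (Hᵀ *ᵥ p2))) p2} := by
  have hdet : IsUnit Q1.det := isUnit_iff_ne_zero.mpr (ne_of_gt hQ1.det_pos)
  have hQ1i : Q1⁻¹ * Q1 = 1 := Matrix.nonsing_inv_mul Q1 hdet
  have hQ1i' : Q1 * Q1⁻¹ = 1 := Matrix.mul_nonsing_inv Q1 hdet
  refine le_antisymm ?_ ?_
  · intro x hx
    rw [LinearMap.mem_ker, Matrix.toLin'_apply] at hx
    set x1 : Fin a → ℝ := x ∘ Sum.inl with hx1def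
    set x2 : Fin b → ℝ := x ∘ Sum.inr with hx2def
    have hxelim : x = Sum.elim x1 x2 := by
      funext i; cases i <;> rfl
    rw [hxelim, fromBlocks_mulVec] at hx
    have h1 : Q1 *ᵥ x1 + Hᵀ *ᵥ x2 = 0 := by
      funext i; exact congrFun hx (Sum.inl i)
    have h2 : H *ᵥ x1 + (H * Q1⁻¹ * Hᵀ + Q2) *ᵥ x2 = 0 := by
      funext i; exact congrFun hx (Sum.inr i)
    have hx1 : x1 = -(Q1⁻¹ *ᵥ (Hᵀ *ᵥ x2)) := by
      have h1' : Q1 *ᵥ x1 = -(Hᵀ *ᵥ x2) := by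
        rw [eq_neg_iff_add_eq_zero]; exact h1
      have := congrArg (fun v => Q1⁻¹ *ᵥ v) h1'
      simpa [mulVec_mulVec, hQ1i, one_mulVec, mulVec_neg] using this
    have hQ2x2 : Q2 *ᵥ x2 = 0 := by
      have : H *ᵥ x1 + (H * Q1⁻¹ * Hᵀ) *ᵥ x2 + Q2 *ᵥ x2 = 0 := by
        simpa [add_mulVec, add_assoc] using h2
      rw [hx1] at this
      have hH : H *ᵥ -(Q1⁻¹ *ᵥ (Hᵀ *ᵥ x2)) = -((H * Q1⁻¹ * Hᵀ) *ᵥ x2) := by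
        simp [mulVec_neg, mulVec_mulVec, Matrix.mul_assoc]
      rw [hH, neg_add_cancel, zero_add] at this
      exact this
    have hx2mem : x2 ∈ Submodule.span ℝ {p2} := by
      rw [← hkerQ2, LinearMap.mem_ker, Matrix.toLin'_apply]
      exact hQ2x2
    obtain ⟨c, hc⟩ := Submodule.mem_span_singleton.mp hx2mem
    refine Submodule.mem_span_singleton.mpr ⟨c, ?_⟩
    rw [hxelim, hx1, ← hc]
    funext i
    cases i with
    | inl i =>
      simp [mulVec_smul, Matrix.mulVec, dotProduct, Finset.mul_sum, mul_left_comm]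
    | inr i => simp
  · rw [Submodule.span_le, Set.singleton_subset_iff]
    have hp2ker : Q2 *ᵥ p2 = 0 := by
      have : p2 ∈ LinearMap.ker (Matrix.toLin' Q2) := by
        rw [hkerQ2]; exact Submodule.mem_span_singleton_self p2
      rwa [LinearMap.mem_ker, Matrix.toLin'_apply] at this
    show _ ∈ LinearMap.ker _
    rw [LinearMap.mem_ker, Matrix.toLin'_apply, fromBlocks_mulVec]
    have hA : Q1 *ᵥ -(Q1⁻¹ *ᵥ (Hᵀ *ᵥ p2)) + Hᵀ *ᵥ p2 = 0 := by
      simp [mulVec_neg, mulVec_mulVec, ← Matrix.mul_assoc, hQ1i', one_mulVec]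
    have hB : H *ᵥ -(Q1⁻¹ *ᵥ (Hᵀ *ᵥ p2)) + (H * Q1⁻¹ * Hᵀ + Q2) *ᵥ p2 = 0 := by
      simp only [mulVec_neg, mulVec_mulVec, add_mulVec, Matrix.mul_assoc, hp2ker, add_zero]
      exact neg_add_cancel _
    simp only [Sum.elim_comp_inl, Sum.elim_comp_inr]
    rw [hA, hB]
    funext i; cases i <;> rfl
end
end

section
/- Let A, P, Q ∈ ℝ^{n×n} with P symmetric positive definite, Q symmetric positive semidefinite, and P·A + Aᵀ·P = −Q. Suppose ker Q = span{p} for some nonzero p ∈ ℝⁿ and A p = 0. Then ker A = span{p}. -/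
noncomputable section
open Matrix

theorem stmt10 {n : ℕ}
    (A P Q : Matrix (Fin n) (Fin n) ℝ)
    (hP : P.PosDef) (hQ : Q.PosSemidef)
    (hLyap : P * A + Aᵀ * P = -Q)
    (p : Fin n → ℝ) (hp : p ≠ 0)
    (hkerQ : LinearMap.ker (Matrix.toLin' Q) = Submodule.span ℝ {p})
    (hAp : A *ᵥ p = 0) :
    LinearMap.ker (Matrix.toLin' A) = Submodule.span ℝ {p} := by
  apply le_antisymm
  · intro x hx
    have hAx : A *ᵥ x = 0 := by simpa [Matrix.toLin'_apply] using hx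
    have hQx : Q *ᵥ x = 0 := by
      rw [← hQ.dotProduct_mulVec_zero_iff]
      have h1 : (P * A + Aᵀ * P) *ᵥ x = -(Q *ᵥ x) := by
        rw [hLyap]; simp [Matrix.neg_mulVec]
      have h2 : x ⬝ᵥ ((P * A + Aᵀ * P) *ᵥ x) = 0 := by
        rw [Matrix.add_mulVec, ← Matrix.mulVec_mulVec, ← Matrix.mulVec_mulVec,
          hAx, Matrix.mulVec_zero, dotProduct_add, dotProduct_zero,
          Matrix.dotProduct_mulVec, Matrix.vecMul_transpose, hAx, zero_dotProduct]
        simp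
      have := h1 ▸ h2
      simp only [dotProduct_neg, neg_eq_zero] at this
      simpa using this
    rw [← hkerQ]
    simpa [Matrix.toLin'_apply] using hQx
  · rw [Submodule.span_le, Set.singleton_subset_iff]
    simpa [Matrix.toLin'_apply] using hAp
end
end

section
/- Let A, P, Q ∈ ℝ^{n×n} with P symmetric positive definite, Q symmetric positive semidefinite, P·A + Aᵀ·P = −Q, and A p = 0 for some nonzero p ∈ ℝⁿ. Then Q p = 0, pᵀP A = 0, and the matrix M = P − (P p)(P p)ᵀ/(pᵀP p) satisfies M·A + Aᵀ·M = −Q. -/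
noncomputable section
open Matrix

theorem stmt12 {n : ℕ}
    (A P Q : Matrix (Fin n) (Fin n) ℝ)
    (hP : P.PosDef) (hQ : Q.PosSemidef)
    (hLyap : P * A + Aᵀ * P = -Q)
    (p : Fin n → ℝ) (hp : p ≠ 0)
    (hAp : A *ᵥ p = 0) :
    Q *ᵥ p = 0 ∧
    Matrix.vecMul p (P * A) = 0 ∧
    (let M : Matrix (Fin n) (Fin n) ℝ :=
      P - (p ⬝ᵥ (P *ᵥ p))⁻¹ • Matrix.vecMulVec (P *ᵥ p) (P *ᵥ p)
     M * A + Aᵀ * M = -Q) := by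
  have h1 : Aᵀ *ᵥ (P *ᵥ p) = -(Q *ᵥ p) := by
    have := congrArg (· *ᵥ p) hLyap
    simpa [add_mulVec, ← mulVec_mulVec, hAp, neg_mulVec] using this
  have hQp : Q *ᵥ p = 0 := by
    rw [← hQ.dotProduct_mulVec_zero_iff]
    have : p ⬝ᵥ (Aᵀ *ᵥ (P *ᵥ p)) = 0 := by
      rw [dotProduct_mulVec, vecMul_transpose, hAp, zero_dotProduct]
    rw [h1, dotProduct_neg] at this
    simpa using this
  have hAtPp : Aᵀ *ᵥ (P *ᵥ p) = 0 := by rw [h1, hQp, neg_zero]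
  have hvm : vecMul (P *ᵥ p) A = 0 := by
    rw [mulVec_transpose] at hAtPp
    exact hAtPp
  have h2 : Matrix.vecMul p (P * A) = 0 := by
    have hPs : Pᵀ = P := by simpa using hP.1.eq
    have : vecMul p P = P *ᵥ p := by
      have h := vecMul_transpose P p
      rw [hPs] at h; exact h
    rw [← vecMul_vecMul, this, hvm]
  refine ⟨hQp, h2, ?_⟩
  intro M
  show M * A + Aᵀ * M = -Q
  have e1 : vecMulVec (P *ᵥ p) (P *ᵥ p) * A = 0 := by
    ext i j
    have := congrFun hvm j
    simp only [vecMul, dotProduct, Pi.zero_apply] at this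
    simp [vecMulVec_apply, Matrix.mul_apply, mul_assoc, ← Finset.mul_sum, this]
  have e2 : Aᵀ * vecMulVec (P *ᵥ p) (P *ᵥ p) = 0 := by
    ext i j
    have := congrFun hAtPp i
    simp only [mulVec, dotProduct, Pi.zero_apply] at this
    simp only [Matrix.mul_apply, vecMulVec_apply, Matrix.zero_apply, ← mul_assoc,
      ← Finset.sum_mul]
    rw [show (∑ k, Aᵀ i k * (P *ᵥ p) k) = 0 from by
      simpa [mulVec, dotProduct] using congrFun hAtPp i, zero_mul]
  simp only [M, sub_mul, mul_sub, Matrix.mul_smul, Matrix.smul_mul, e1, e2, smul_zero,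
    sub_zero]
  exact hLyap
end
end

section
/- Let η, K_p, C_dc > 0 and let D = diag(d₁, …, dₙ) with d_k > 0 for all k. Then the 2n×2n real matrix A₁₁ = [[0, η·Iₙ],[−C_dc⁻¹·D, −C_dc⁻¹K_p·Iₙ]] is Hurwitz: every complex eigenvalue of A₁₁ has strictly negative real part. -/
noncomputable section
open Matrix

/-- A real square matrix is Hurwitz if every complex eigenvalue (root of the
characteristic polynomial over `ℂ`) has strictly negative real part. -/
def IsHurwitz {ι : Type*} [Fintype ι] [DecidableEq ι] (M : Matrix ι ι ℝ) : Prop :=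
  ∀ μ : ℂ, (M.map Complex.ofReal).charpoly.IsRoot μ → μ.re < 0

/-- Quadratic with positive real coefficients has roots with negative real part. -/
lemma quad_root_re_neg (b c : ℝ) (hb : 0 < b) (hc : 0 < c) (μ : ℂ)
    (h : μ ^ 2 + (b : ℂ) * μ + (c : ℂ) = 0) : μ.re < 0 := by
  have him : 2 * μ.re * μ.im + b * μ.im = 0 := by
    have := congrArg Complex.im h
    simp [Complex.add_im, Complex.mul_im, pow_two, Complex.mul_re] at this
    nlinarith [this]
  have hre : μ.re ^ 2 - μ.im ^ 2 + b * μ.re + c = 0 := by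
    have := congrArg Complex.re h
    simp [Complex.add_re, Complex.mul_re, pow_two, Complex.mul_im] at this
    nlinarith [this]
  rcases mul_eq_zero.mp (show μ.im * (2 * μ.re + b) = 0 by nlinarith [him]) with h1 | h1
  · nlinarith
  · nlinarith

/-- A root of the charpoly over `ℂ` gives an eigenvector. -/
lemma exists_eigenvector {ι : Type*} [Fintype ι] [DecidableEq ι] (M : Matrix ι ι ℂ) (μ : ℂ)
    (h : M.charpoly.IsRoot μ) : ∃ v : ι → ℂ, v ≠ 0 ∧ M.mulVec v = μ • v := by
  have hdet : (Matrix.scalar ι μ - M).det = 0 := by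
    rw [Polynomial.IsRoot, Matrix.charpoly, _root_.eval_det, Matrix.matPolyEquiv_charmatrix] at h
    simpa using h
  obtain ⟨v, hv, hmv⟩ := Matrix.exists_mulVec_eq_zero_iff.mpr hdet
  refine ⟨v, hv, ?_⟩
  have h1 : (Matrix.scalar ι μ).mulVec v - M.mulVec v = 0 := by
    rw [← Matrix.sub_mulVec]; exact hmv
  have h2 : (Matrix.scalar ι μ).mulVec v = μ • v := by
    ext i; simp [Matrix.scalar, Matrix.mulVec_diagonal]
  rw [h2, sub_eq_zero] at h1
  exact h1.symm

theorem stmt14 {n : ℕ} (η Kp Cdc : ℝ) (hη : 0 < η) (hKp : 0 < Kp) (hCdc : 0 < Cdc)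
    (d : Fin n → ℝ) (hd : ∀ k, 0 < d k) :
    IsHurwitz (Matrix.fromBlocks
      (0 : Matrix (Fin n) (Fin n) ℝ) (η • (1 : Matrix (Fin n) (Fin n) ℝ))
      (-(Cdc⁻¹) • Matrix.diagonal d) (-(Cdc⁻¹ * Kp) • (1 : Matrix (Fin n) (Fin n) ℝ))) := by
  intro μ hroot
  obtain ⟨v, hv, hmv⟩ := exists_eigenvector _ μ hroot
  set x : Fin n → ℂ := fun k => v (Sum.inl k) with hx
  set y : Fin n → ℂ := fun k => v (Sum.inr k) with hy
  -- componentwise equations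
  have heq1 : ∀ k, (η : ℂ) * y k = μ * x k := by
    intro k
    have := congrFun hmv (Sum.inl k)
    simpa [Matrix.fromBlocks, Matrix.mulVec, dotProduct, Matrix.map_apply,
      Matrix.one_apply, apply_ite Complex.ofReal, ite_mul, Finset.sum_ite_eq, Finset.sum_ite_eq']
      using this
  have heq2 : ∀ k, (-(Cdc⁻¹ : ℂ)) * (d k : ℂ) * x k + (-((Cdc : ℂ)⁻¹ * (Kp : ℂ))) * y k
      = μ * y k := by
    intro k
    have h := congrFun hmv (Sum.inr k)
    simp [Matrix.fromBlocks, Matrix.mulVec, dotProduct, Matrix.map_apply,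
      Matrix.one_apply, Matrix.diagonal_apply, apply_ite Complex.ofReal, ite_mul, mul_ite,
      Finset.sum_ite_eq, Finset.sum_ite_eq'] at h
    linear_combination h
  -- find k with x k ≠ 0
  obtain ⟨j, hj⟩ := Function.ne_iff.mp hv
  have hηC : (η : ℂ) ≠ 0 := by exact_mod_cast hη.ne'
  obtain ⟨k, hk⟩ : ∃ k, x k ≠ 0 := by
    cases j with
    | inl k => exact ⟨k, hj⟩
    | inr k =>
      refine ⟨k, fun h0 => ?_⟩
      have h1 := heq1 k
      rw [h0, mul_zero] at h1
      exact hj (by simpa [hηC] using mul_eq_zero.mp h1)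
  have h1 := heq1 k
  have h2 := heq2 k
  have key : (μ ^ 2 + ((Cdc⁻¹ * Kp : ℝ) : ℂ) * μ + ((η * Cdc⁻¹ * d k : ℝ) : ℂ)) * x k = 0 := by
    push_cast
    linear_combination (-(η : ℂ)) * h2 + (-(μ + (Cdc : ℂ)⁻¹ * Kp)) * h1
  have hzero : μ ^ 2 + ((Cdc⁻¹ * Kp : ℝ) : ℂ) * μ + ((η * Cdc⁻¹ * d k : ℝ) : ℂ) = 0 :=
    (mul_eq_zero.mp key).resolve_right hk
  exact quad_root_re_neg (Cdc⁻¹ * Kp) (η * Cdc⁻¹ * d k)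
    (by positivity) (mul_pos (mul_pos hη (inv_pos.mpr hCdc)) (hd k)) μ hzero
end
end

section
/- Let η, K_p, C_dc > 0 and let D = diag(d₁, …, dₙ) with d_k > 0 for all k. Define A₁₁ = [[0, η·Iₙ],[−C_dc⁻¹·D, −C_dc⁻¹K_p·Iₙ]], P₁₁ = (1/η)·((K_p/2)·D⁻¹ + (1/(2K_p))·D + (ηC_dc/(2K_p))·Iₙ), P₁₂ = (C_dc/2)·D⁻¹, and P₂₂ = (C_dc/(2K_p))·(Iₙ + ηC_dc·D⁻¹). Then the block matrix P₁ = [[P₁₁, P₁₂],[P₁₂, P₂₂]] is symmetric positive definite and satisfies the Lyapunov equation P₁·A₁₁ + A₁₁ᵀ·P₁ = −I_{2n}. -/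
noncomputable section
open Matrix

private lemma quad_pos {p q r a b : ℝ} (hp : 0 < p) (hdet : 0 < p * r - q * q)
    (hab : a ≠ 0 ∨ b ≠ 0) : 0 < a * (p * a + q * b) + b * (q * a + r * b) := by
  rcases eq_or_ne b 0 with hb | hb
  · subst hb
    have ha : a ≠ 0 := by tauto
    have : 0 < a * a := mul_self_pos.mpr ha
    nlinarith
  · have h1 : 0 < (p * r - q * q) * (b * b) := mul_pos hdet (mul_self_pos.mpr hb)
    nlinarith [sq_nonneg (p * a + q * b)]

set_option maxHeartbeats 1000000 in
theorem stmt15 {n : ℕ} (η Kp Cdc : ℝ) (hη : 0 < η) (hKp : 0 < Kp) (hCdc : 0 < Cdc)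
    (d : Fin n → ℝ) (hd : ∀ k, 0 < d k) :
    let D : Matrix (Fin n) (Fin n) ℝ := Matrix.diagonal d
    let A11 : Matrix (Fin n ⊕ Fin n) (Fin n ⊕ Fin n) ℝ :=
      Matrix.fromBlocks 0 (η • 1) (-(Cdc⁻¹) • D) (-(Cdc⁻¹ * Kp) • 1)
    let P11 : Matrix (Fin n) (Fin n) ℝ :=
      (1 / η) • ((Kp / 2) • D⁻¹ + (1 / (2 * Kp)) • D + (η * Cdc / (2 * Kp)) • 1)
    let P12 : Matrix (Fin n) (Fin n) ℝ := (Cdc / 2) • D⁻¹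
    let P22 : Matrix (Fin n) (Fin n) ℝ := (Cdc / (2 * Kp)) • ((1 : Matrix (Fin n) (Fin n) ℝ) + (η * Cdc) • D⁻¹)
    let P1 : Matrix (Fin n ⊕ Fin n) (Fin n ⊕ Fin n) ℝ := Matrix.fromBlocks P11 P12 P12 P22
    P1.PosDef ∧ P1 * A11 + A11ᵀ * P1 = -(1 : Matrix (Fin n ⊕ Fin n) (Fin n ⊕ Fin n) ℝ) := by
  intro D A11 P11 P12 P22 P1
  have hd' : ∀ k, d k ≠ 0 := fun k => (hd k).ne'
  have hDinv : D⁻¹ = Matrix.diagonal (fun k => (d k)⁻¹) := by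
    apply Matrix.inv_eq_right_inv
    rw [show D = Matrix.diagonal d from rfl, Matrix.diagonal_mul_diagonal, ← Matrix.diagonal_one]
    have hfun : (fun k => d k * (d k)⁻¹) = fun _ : Fin n => (1:ℝ) :=
      funext fun k => mul_inv_cancel₀ (hd' k)
    rw [hfun]
  set p : Fin n → ℝ := fun k =>
    1 / η * (Kp / 2 * (d k)⁻¹ + 1 / (2 * Kp) * d k + η * Cdc / (2 * Kp)) with hp
  set q : Fin n → ℝ := fun k => Cdc / 2 * (d k)⁻¹ with hq
  set r : Fin n → ℝ := fun k => Cdc / (2 * Kp) * (1 + η * Cdc * (d k)⁻¹) with hr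
  have hP11 : P11 = Matrix.diagonal p := by
    show (1 / η) • ((Kp / 2) • D⁻¹ + (1 / (2 * Kp)) • D + (η * Cdc / (2 * Kp)) • 1) = _
    rw [hDinv, show D = Matrix.diagonal d from rfl]
    ext i j
    rcases eq_or_ne i j with h | h
    · subst h
      simp [Matrix.one_apply, hp]
    · simp [Matrix.diagonal_apply_ne _ h, Matrix.one_apply_ne h]
  have hP12 : P12 = Matrix.diagonal q := by
    show (Cdc / 2) • D⁻¹ = _
    rw [hDinv]
    ext i j
    rcases eq_or_ne i j with h | h
    · subst h; simp [hq]
    · simp [Matrix.diagonal_apply_ne _ h]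
  have hP22 : P22 = Matrix.diagonal r := by
    show (Cdc / (2 * Kp)) • ((1 : Matrix (Fin n) (Fin n) ℝ) + (η * Cdc) • D⁻¹) = _
    rw [hDinv]
    ext i j
    rcases eq_or_ne i j with h | h
    · subst h; simp [Matrix.one_apply, hr]
    · simp [Matrix.diagonal_apply_ne _ h, Matrix.one_apply_ne h]
  have hA : A11 = Matrix.fromBlocks (Matrix.diagonal (fun _ : Fin n => (0:ℝ)))
      (Matrix.diagonal (fun _ : Fin n => η))
      (Matrix.diagonal (fun k => -(Cdc⁻¹) * d k))
      (Matrix.diagonal (fun _ : Fin n => -(Cdc⁻¹ * Kp))) := by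
    have h1 : (0 : Matrix (Fin n) (Fin n) ℝ) = Matrix.diagonal (fun _ : Fin n => (0:ℝ)) := by simp
    have h2 : η • (1 : Matrix (Fin n) (Fin n) ℝ) = Matrix.diagonal (fun _ : Fin n => η) := by
      ext i j
      rcases eq_or_ne i j with h | h
      · subst h; simp
      · simp [Matrix.diagonal_apply_ne _ h, Matrix.one_apply_ne h]
    have h3 : -(Cdc⁻¹) • D = Matrix.diagonal (fun k => -(Cdc⁻¹) * d k) := by
      rw [show D = Matrix.diagonal d from rfl]
      ext i j
      rcases eq_or_ne i j with h | h
      · subst h; simp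
      · simp [Matrix.diagonal_apply_ne _ h]
    have h4 : -(Cdc⁻¹ * Kp) • (1 : Matrix (Fin n) (Fin n) ℝ) =
        Matrix.diagonal (fun _ : Fin n => -(Cdc⁻¹ * Kp)) := by
      ext i j
      rcases eq_or_ne i j with h | h
      · subst h; simp
      · simp [Matrix.diagonal_apply_ne _ h, Matrix.one_apply_ne h]
    show Matrix.fromBlocks 0 (η • 1) (-(Cdc⁻¹) • D) (-(Cdc⁻¹ * Kp) • 1) = _
    rw [h1, h2, h3, h4]
  have hppos : ∀ k, 0 < p k := fun k => by
    have := hd k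
    simp only [hp]
    positivity
  have hdet : ∀ k, 0 < p k * r k - q k * q k := fun k => by
    have hdk := hd k
    have h1 : p k * r k - q k * q k =
        Cdc / (4 * η * d k) + Cdc * d k / (4 * η * Kp ^ 2) + Cdc ^ 2 / (2 * Kp ^ 2)
          + η * Cdc ^ 3 / (4 * Kp ^ 2 * d k) := by
      simp only [hp, hq, hr]
      field_simp
      ring
    rw [h1]
    positivity
  constructor
  · -- positive definiteness
    rw [Matrix.posDef_iff_dotProduct_mulVec]
    constructor
    · -- hermitian
      show P1ᵀ = P1
      rw [show P1 = Matrix.fromBlocks P11 P12 P12 P22 from rfl, hP11, hP12, hP22,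
        Matrix.fromBlocks_transpose]
      simp
    · intro x hx
      have hx' : x = Sum.elim (x ∘ Sum.inl) (x ∘ Sum.inr) := by
        ext (i | i) <;> rfl
      rw [show P1 = Matrix.fromBlocks P11 P12 P12 P22 from rfl, hP11, hP12, hP22]
      rw [hx', Matrix.fromBlocks_mulVec]
      simp only [star_trivial, Sum.elim_comp_inl, Sum.elim_comp_inr]
      rw [sumElim_dotProduct_sumElim]
      simp only [dotProduct, Pi.add_apply, Matrix.mulVec_diagonal]
      rw [← Finset.sum_add_distrib]
      have key : ∀ k : Fin n,
          0 ≤ (x ∘ Sum.inl) k * (p k * (x ∘ Sum.inl) k + q k * (x ∘ Sum.inr) k)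
            + (x ∘ Sum.inr) k * (q k * (x ∘ Sum.inl) k + r k * (x ∘ Sum.inr) k) := by
        intro k
        by_cases h : (x ∘ Sum.inl) k = 0 ∧ (x ∘ Sum.inr) k = 0
        · rw [h.1, h.2]; norm_num
        · rw [not_and_or] at h
          exact (quad_pos (hppos k) (hdet k) h).le
      obtain ⟨i, hi⟩ : ∃ i, x i ≠ 0 := Function.ne_iff.mp hx
      have hex : ∃ k ∈ Finset.univ, (0:ℝ) <
          (x ∘ Sum.inl) k * (p k * (x ∘ Sum.inl) k + q k * (x ∘ Sum.inr) k)
            + (x ∘ Sum.inr) k * (q k * (x ∘ Sum.inl) k + r k * (x ∘ Sum.inr) k) := by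
        rcases i with i | i
        · exact ⟨i, Finset.mem_univ i, quad_pos (hppos i) (hdet i) (Or.inl hi)⟩
        · exact ⟨i, Finset.mem_univ i, quad_pos (hppos i) (hdet i) (Or.inr hi)⟩
      have := Finset.sum_pos' (fun k _ => key k) hex
      convert this using 2 with k
      try ring
  · -- Lyapunov equation
    rw [show P1 = Matrix.fromBlocks P11 P12 P12 P22 from rfl, hP11, hP12, hP22, hA]
    rw [Matrix.fromBlocks_transpose, Matrix.fromBlocks_multiply, Matrix.fromBlocks_multiply,
      Matrix.fromBlocks_add]
    simp only [Matrix.diagonal_transpose, Matrix.diagonal_mul_diagonal, Matrix.diagonal_add]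
    have g11 : (fun i => p i * 0 + q i * (-Cdc⁻¹ * d i) + (0 * p i + -Cdc⁻¹ * d i * q i))
        = fun _ : Fin n => (-1 : ℝ) := by
      funext i
      have hdk := hd' i
      simp only [hp, hq, hr]
      field_simp
      ring
    have g12 : (fun i => p i * η + q i * -(Cdc⁻¹ * Kp) + (0 * q i + -Cdc⁻¹ * d i * r i))
        = fun _ : Fin n => (0 : ℝ) := by
      funext i
      have hdk := hd' i
      simp only [hp, hq, hr]
      field_simp
      ring
    have g21 : (fun i => q i * 0 + r i * (-Cdc⁻¹ * d i) + (η * p i + -(Cdc⁻¹ * Kp) * q i))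
        = fun _ : Fin n => (0 : ℝ) := by
      funext i
      have hdk := hd' i
      simp only [hp, hq, hr]
      field_simp
      ring
    have g22 : (fun i => q i * η + r i * -(Cdc⁻¹ * Kp) + (η * q i + -(Cdc⁻¹ * Kp) * r i))
        = fun _ : Fin n => (0 : ℝ) + (-1 : ℝ) := by
      funext i
      have hdk := hd' i
      simp only [hp, hq, hr]
      field_simp
      ring
    rw [g11, g12, g21, g22]
    show Matrix.fromBlocks (Matrix.diagonal fun _ => (-1:ℝ)) (Matrix.diagonal fun _ => (0:ℝ))
        (Matrix.diagonal fun _ => (0:ℝ)) (Matrix.diagonal fun _ => (0:ℝ) + (-1:ℝ)) = -1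
    have e1 : (Matrix.diagonal fun _ : Fin n => (-1:ℝ)) = -1 := by
      ext i j
      rcases eq_or_ne i j with h | h
      · subst h; simp [Matrix.one_apply]
      · simp [Matrix.diagonal_apply_ne _ h, Matrix.one_apply_ne h]
    have e2 : (Matrix.diagonal fun _ : Fin n => (0:ℝ)) = 0 := Matrix.diagonal_zero
    have e3 : (Matrix.diagonal fun _ : Fin n => (0:ℝ) + (-1:ℝ)) = -1 := by
      ext i j
      rcases eq_or_ne i j with h | h
      · subst h; simp [Matrix.one_apply]
      · simp [Matrix.diagonal_apply_ne _ h, Matrix.one_apply_ne h]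
    rw [e1, e2, e3, ← Matrix.fromBlocks_one, Matrix.fromBlocks_neg, neg_zero]
end
end
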